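/- arXiv:1904.01900 — 8 statements merged into one kernel-verified Lean document; each statement's English description precedes it below -/
import Mathlib

section
/- If F : X → Y is topology bounded and satisfies ||F(kx)||_Y ≤ M|k|·||F(x)||_Y for some positive constant M, every scalar k ≠ 0, and every x ≠ 0, then F ∈ B(X,Y), i.e., p(F) is finite. -/
open scoped ENNReal NNReal

/-- The (possibly infinite) norm `p(F) = max(sup_{x ≠ 0} ‖F x‖ / ‖x‖, ‖F 0‖)` on maps. -/
noncomputable def pm {X Y : Type*} [NormedAddCommGroup X] [NormedAddCommGroup Y]
    (F : X → Y) : ℝ≥0∞ :=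
  max (⨆ x : {x : X // x ≠ 0}, (‖F x.1‖₊ : ℝ≥0∞) / (‖x.1‖₊ : ℝ≥0∞)) (‖F 0‖₊ : ℝ≥0∞)

/-- A topology bounded `M`-contraction operator belongs to `B(X,Y)`, i.e. `p F` is finite. -/
theorem stmt4 {𝕜 X Y : Type*} [RCLike 𝕜] [NormedAddCommGroup X] [NormedSpace 𝕜 X]
    [NormedAddCommGroup Y] [NormedSpace 𝕜 Y]
    (F : X → Y) (M : ℝ) (hM : 0 < M)
    (htb : ∀ s : Set X, Bornology.IsBounded s → Bornology.IsBounded (F '' s))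
    (hcontr : ∀ k : 𝕜, k ≠ 0 → ∀ x : X, x ≠ 0 → ‖F (k • x)‖ ≤ M * ‖k‖ * ‖F x‖) :
    pm F ≠ ⊤ := by
  have hS : Bornology.IsBounded (F '' Metric.sphere (0 : X) 1) :=
    htb _ Metric.isBounded_sphere
  obtain ⟨C, hC⟩ := hS.exists_norm_le
  have hC0 : 0 ≤ C ∨ ∀ x : X, x = 0 := by
    by_cases h : ∀ x : X, x = 0
    · exact Or.inr h
    · push_neg at h
      obtain ⟨x, hx⟩ := h
      have hu : (‖x‖⁻¹ : 𝕜) • x ∈ Metric.sphere (0 : X) 1 := by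
        simp [norm_smul, RCLike.norm_ofReal, abs_of_nonneg (inv_nonneg.2 (norm_nonneg x)),
          inv_mul_cancel₀ (norm_ne_zero_iff.2 hx)]
      exact Or.inl ((norm_nonneg _).trans (hC _ ⟨_, hu, rfl⟩))
  have key : ∀ x : X, x ≠ 0 → ‖F x‖ ≤ M * C * ‖x‖ := by
    intro x hx
    have hC0' : 0 ≤ C := hC0.resolve_right (fun h => hx (h x))
    set u : X := (‖x‖⁻¹ : 𝕜) • x with hu_def
    have hxn : ‖x‖ ≠ 0 := norm_ne_zero_iff.2 hx
    have hu : u ∈ Metric.sphere (0 : X) 1 := by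
      simp [hu_def, norm_smul, RCLike.norm_ofReal, abs_of_nonneg (inv_nonneg.2 (norm_nonneg x)),
        inv_mul_cancel₀ hxn]
    have hune : u ≠ 0 := by
      intro h
      simp [h] at hu
    have hxu : x = (‖x‖ : 𝕜) • u := by
      rw [hu_def, smul_smul]
      rw [← RCLike.ofReal_inv, ← RCLike.ofReal_mul, mul_inv_cancel₀ hxn]
      simp
    have hk : (‖x‖ : 𝕜) ≠ 0 := by
      simpa using hxn
    calc ‖F x‖ = ‖F ((‖x‖ : 𝕜) • u)‖ := by rw [← hxu]
      _ ≤ M * ‖(‖x‖ : 𝕜)‖ * ‖F u‖ := hcontr _ hk _ hune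
      _ ≤ M * ‖x‖ * C := by
          rw [RCLike.norm_ofReal, abs_of_nonneg (norm_nonneg x)]
          exact mul_le_mul_of_nonneg_left (hC _ ⟨_, hu, rfl⟩)
            (mul_nonneg hM.le (norm_nonneg x))
      _ = M * C * ‖x‖ := by ring
  rw [pm, ne_eq, max_eq_top, not_or]
  constructor
  · intro htop
    apply absurd htop
    apply ne_of_lt
    apply lt_of_le_of_lt (iSup_le fun x => ?_) (show ((M*C).toNNReal : ℝ≥0∞) < ⊤ from ENNReal.coe_lt_top)
    rw [ENNReal.div_le_iff (by simpa using x.2) (by simp)]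
    rw [← ENNReal.coe_mul, ENNReal.coe_le_coe, ← NNReal.coe_le_coe]
    push_cast
    calc ‖F x.1‖ ≤ M * C * ‖x.1‖ := key _ x.2
      _ ≤ (M*C).toNNReal * ‖x.1‖ :=
        mul_le_mul_of_nonneg_right (Real.le_coe_toNNReal _) (norm_nonneg _)
  · simp
end

section
/- The set B^M(X,Y) of topology bounded M-contraction operators is a closed subset of the normed space B(X,Y): if F_n ∈ B^M(X,Y) converge to F in the norm of B(X,Y), then F satisfies ||F(kx)||_Y ≤ M|k|·||F(x)||_Y for all scalars k ≠ 0 and all x ≠ 0. -/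
/-!
Convergence in `p` gives pointwise convergence `Fₙ y → G y` (the term `‖F 0‖` of `p` covers
`y = 0`), and the inequality `‖Fₙ (k • x)‖ ≤ M ‖k‖ ‖Fₙ x‖` between two point values passes to
the limit.
-/

open scoped ENNReal NNReal

open Filter Topology

section pm

variable {X Y : Type*} [NormedAddCommGroup X] [NormedAddCommGroup Y]

theorem enorm_apply_le_pm_mul (H : X → Y) (y : X) : ‖H y‖ₑ ≤ pm H * max ‖y‖ₑ 1 := by
  rcases eq_or_ne y 0 with rfl | hy
  · simp [pm]
  · have hquot : (‖H y‖₊ : ℝ≥0∞) / ‖y‖₊ ≤ pm H :=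
      le_max_of_le_left (le_iSup (fun x : {x : X // x ≠ 0} => (‖H x.1‖₊ : ℝ≥0∞) / ‖x.1‖₊) ⟨y, hy⟩)
    calc ‖H y‖ₑ ≤ pm H * ‖y‖ₑ :=
          (ENNReal.div_le_iff (by simpa using hy) (by simp)).mp hquot
      _ ≤ pm H * max ‖y‖ₑ 1 := by gcongr; exact le_max_left _ _

theorem tendsto_apply_of_tendsto_pm_sub {ι : Type*} {l : Filter ι} {F : ι → X → Y} {G : X → Y}
    (h : Tendsto (fun n => pm (F n - G)) l (𝓝 0)) (y : X) :
    Tendsto (fun n => F n y) l (𝓝 (G y)) := by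
  rw [tendsto_iff_edist_tendsto_0]
  have hbound : Tendsto (fun n => pm (F n - G) * max ‖y‖ₑ 1) l (𝓝 0) := by
    simpa using ENNReal.Tendsto.mul_const h (Or.inr (by simp))
  refine tendsto_of_tendsto_of_tendsto_of_le_of_le tendsto_const_nhds hbound
    (fun _ => zero_le) fun n => ?_
  simpa [edist_eq_enorm_sub] using enorm_apply_le_pm_mul (F n - G) y

end pm

theorem stmt5_general {𝕜 X Y : Type*} [RCLike 𝕜] [NormedAddCommGroup X] [NormedSpace 𝕜 X]
    [NormedAddCommGroup Y] [NormedSpace 𝕜 Y]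
    (M : ℝ) (F : ℕ → X → Y) (G : X → Y)
    (hFc : ∀ n, ∀ k : 𝕜, k ≠ 0 → ∀ x : X, x ≠ 0 → ‖F n (k • x)‖ ≤ M * ‖k‖ * ‖F n x‖)
    (hconv : Filter.Tendsto (fun n => pm (F n - G)) Filter.atTop (nhds 0)) :
    ∀ k : 𝕜, k ≠ 0 → ∀ x : X, x ≠ 0 → ‖G (k • x)‖ ≤ M * ‖k‖ * ‖G x‖ := by
  intro k hk x hx
  have hnorm (y : X) : Tendsto (fun n => ‖F n y‖) atTop (𝓝 ‖G y‖) :=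
    (tendsto_apply_of_tendsto_pm_sub hconv y).norm
  exact le_of_tendsto_of_tendsto (hnorm (k • x)) ((hnorm x).const_mul (M * ‖k‖))
    (Eventually.of_forall fun n => hFc n k hk x hx)

/-- `B^M(X,Y)` is closed in `B(X,Y)`: if topology bounded `M`-contraction operators `Fₙ`
converge to `F` in the norm of `B(X,Y)`, then `F` is an `M`-contraction operator. -/
theorem stmt5 {𝕜 X Y : Type*} [RCLike 𝕜] [NormedAddCommGroup X] [NormedSpace 𝕜 X]
    [NormedAddCommGroup Y] [NormedSpace 𝕜 Y]
    (M : ℝ) (hM : 0 < M) (F : ℕ → X → Y) (G : X → Y)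
    (hFB : ∀ n, pm (F n) ≠ ⊤)
    (hFtb : ∀ n, ∀ s : Set X, Bornology.IsBounded s → Bornology.IsBounded (F n '' s))
    (hFc : ∀ n, ∀ k : 𝕜, k ≠ 0 → ∀ x : X, x ≠ 0 → ‖F n (k • x)‖ ≤ M * ‖k‖ * ‖F n x‖)
    (hGB : pm G ≠ ⊤)
    (hconv : Filter.Tendsto (fun n => pm (F n - G)) Filter.atTop (nhds 0)) :
    ∀ k : 𝕜, k ≠ 0 → ∀ x : X, x ≠ 0 → ‖G (k • x)‖ ≤ M * ‖k‖ * ‖G x‖ :=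
  stmt5_general M F G hFc hconv
end

section
/- Nonlinear uniform boundedness theorem: Let {F_α}_{α∈I} be a family of continuous M-contraction operators from a Banach space X into a normed space Y such that (a) for each x ∈ X the set {||F_α(x)||_Y : α ∈ I} is bounded, and (b) there is a constant L > 0 with ||F_α(x₁+x₂)||_Y ≤ L·||F_α(x₁)+F_α(x₂)||_Y for all α and all x₁, x₂ ∈ X. Then {F_α} is uniformly norm bounded: there is c > 0 with ||F_α||_{B(X,Y)} ≤ c for all α ∈ I. -/
/-!
By Baire's theorem the closed sets `{x | ∀ α, ‖F α x‖ ≤ n}` cannot all have empty interior, so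
the family is uniformly bounded on some ball `B(x₀, r)`. Writing `z = (x₀ + z) + (-x₀)`, the
`L`-subadditivity together with `‖F α (-x₀)‖ ≤ M ‖F α x₀‖` moves this bound to the ball `B(0, r)`,
and the `M`-contraction property rescales it to a bound `‖F α x‖ ≤ (2 M C / r) ‖x‖`.
-/

open scoped ENNReal NNReal

def IsContractionOperator (𝕜 : Type*) {X Y : Type*} [NormedField 𝕜] [NormedAddCommGroup X]
    [Module 𝕜 X] [NormedAddCommGroup Y] (M : ℝ) (f : X → Y) : Prop :=
  ∀ k : 𝕜, k ≠ 0 → ∀ x : X, x ≠ 0 → ‖f (k • x)‖ ≤ M * ‖k‖ * ‖f x‖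

theorem exists_ball_forall_le_of_forall_bddAbove {X I : Type*} [PseudoMetricSpace X]
    [BaireSpace X] [Nonempty X] (f : I → X → ℝ) (hf : ∀ α, Continuous (f α))
    (hbdd : ∀ x, ∃ c, ∀ α, f α x ≤ c) :
    ∃ x₀ : X, ∃ r > 0, ∃ C : ℝ, ∀ α, ∀ x ∈ Metric.ball x₀ r, f α x ≤ C := by
  let E : ℕ → Set X := fun n => ⋂ α, {x | f α x ≤ n}
  have hE_closed : ∀ n, IsClosed (E n) := fun n =>
    isClosed_iInter fun α => isClosed_le (hf α) continuous_const
  have hE_cover : ⋃ n, E n = Set.univ := Set.eq_univ_of_forall fun x => by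
    obtain ⟨c, hc⟩ := hbdd x
    exact Set.mem_iUnion.2 ⟨⌈c⌉₊, Set.mem_iInter.2 fun α => (hc α).trans (Nat.le_ceil c)⟩
  obtain ⟨n, x₀, hx₀⟩ := nonempty_interior_of_iUnion_of_closed hE_closed hE_cover
  obtain ⟨r, hr, hball⟩ := Metric.isOpen_iff.1 isOpen_interior x₀ hx₀
  exact ⟨x₀, r, hr, n, fun α x hx => Set.mem_iInter.1 (interior_subset (hball hx)) α⟩

section ContractionOperator

variable {𝕜 X Y : Type*} [RCLike 𝕜] [NormedAddCommGroup X] [NormedSpace 𝕜 X]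
  [NormedAddCommGroup Y] {M : ℝ} {f : X → Y}

theorem IsContractionOperator.norm_map_neg_le (hf : IsContractionOperator 𝕜 M f) (x : X) :
    ‖f (-x)‖ ≤ max 1 M * ‖f x‖ := by
  rcases eq_or_ne x 0 with rfl | hx
  · simpa using mul_le_mul_of_nonneg_right (le_max_left 1 M) (norm_nonneg (f 0))
  · calc ‖f (-x)‖ = ‖f ((-1 : 𝕜) • x)‖ := by rw [neg_one_smul]
      _ ≤ M * ‖(-1 : 𝕜)‖ * ‖f x‖ := hf (-1) (by norm_num) x hx
      _ ≤ max 1 M * ‖f x‖ := by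
        rw [norm_neg, norm_one, mul_one]
        exact mul_le_mul_of_nonneg_right (le_max_right 1 M) (norm_nonneg _)

theorem IsContractionOperator.norm_le_of_norm_le_on_ball (hf : IsContractionOperator 𝕜 M f)
    {L : ℝ} (hL : 0 ≤ L) (hsub : ∀ x₁ x₂ : X, ‖f (x₁ + x₂)‖ ≤ L * ‖f x₁ + f x₂‖)
    {x₀ : X} {r C : ℝ} (hC : ∀ x ∈ Metric.ball x₀ r, ‖f x‖ ≤ C) {z : X} (hz : ‖z‖ < r) :
    ‖f z‖ ≤ L * (C + max 1 M * C) := by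
  have hx₀ : ‖f x₀‖ ≤ C := hC x₀ (Metric.mem_ball_self ((norm_nonneg z).trans_lt hz))
  have hx₀z : ‖f (x₀ + z)‖ ≤ C := hC _ (by simpa [dist_eq_norm] using hz)
  have hneg : ‖f (-x₀)‖ ≤ max 1 M * C :=
    (hf.norm_map_neg_le x₀).trans
      (mul_le_mul_of_nonneg_left hx₀ (zero_le_one.trans (le_max_left 1 M)))
  calc ‖f z‖ = ‖f ((x₀ + z) + -x₀)‖ := by rw [add_neg_cancel_comm]
    _ ≤ L * ‖f (x₀ + z) + f (-x₀)‖ := hsub _ _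
    _ ≤ L * (‖f (x₀ + z)‖ + ‖f (-x₀)‖) := mul_le_mul_of_nonneg_left (norm_add_le _ _) hL
    _ ≤ L * (C + max 1 M * C) := mul_le_mul_of_nonneg_left (add_le_add hx₀z hneg) hL

theorem IsContractionOperator.norm_le_mul_norm_of_norm_le_on_ball
    (hf : IsContractionOperator 𝕜 M f) (hM : 0 ≤ M) {r C : ℝ} (hr : 0 < r)
    (hC : ∀ z : X, ‖z‖ < r → ‖f z‖ ≤ C) {x : X} (hx : x ≠ 0) :
    ‖f x‖ ≤ 2 * M * C / r * ‖x‖ := by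
  have hx_pos : 0 < ‖x‖ := norm_pos_iff.2 hx
  set t : ℝ := 2 * ‖x‖ / r
  have ht : 0 < t := by positivity
  set y : X := ((t⁻¹ : ℝ) : 𝕜) • x
  have hy_ne : y ≠ 0 := smul_ne_zero (by simpa using ht.ne') hx
  have hy_norm : ‖y‖ < r := by
    have : t⁻¹ * ‖x‖ = r / 2 := by simp only [t]; field_simp
    rw [norm_smul, RCLike.norm_ofReal, abs_of_pos (inv_pos.2 ht), this]
    linarith
  have hxy : x = (t : 𝕜) • y := by
    rw [smul_smul, ← RCLike.ofReal_mul, mul_inv_cancel₀ ht.ne', RCLike.ofReal_one, one_smul]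
  calc ‖f x‖ = ‖f ((t : 𝕜) • y)‖ := by rw [← hxy]
    _ ≤ M * ‖(t : 𝕜)‖ * ‖f y‖ := hf _ (by simpa using ht.ne') y hy_ne
    _ ≤ M * t * C := by
      rw [RCLike.norm_ofReal, abs_of_pos ht]
      exact mul_le_mul_of_nonneg_left (hC y hy_norm) (by positivity)
    _ = 2 * M * C / r * ‖x‖ := by ring

end ContractionOperator

theorem pm_le_of_norm_le {X Y : Type*} [NormedAddCommGroup X] [NormedAddCommGroup Y]
    {f : X → Y} {c : ℝ≥0} (hf : ∀ x, x ≠ 0 → ‖f x‖ ≤ c * ‖x‖) (hf₀ : ‖f 0‖ ≤ c) :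
    pm f ≤ c := by
  refine max_le (iSup_le fun x => ?_) (by exact_mod_cast hf₀)
  rw [ENNReal.div_le_iff (by simpa using x.2) ENNReal.coe_ne_top, ← ENNReal.coe_mul,
    ENNReal.coe_le_coe, ← NNReal.coe_le_coe]
  exact hf x.1 x.2

theorem stmt6_general {𝕜 X Y I : Type*} [RCLike 𝕜] [NormedAddCommGroup X] [NormedSpace 𝕜 X]
    [CompleteSpace X] [NormedAddCommGroup Y]
    (F : I → X → Y) (M : ℝ) (hM : 0 < M)
    (hcont : ∀ α, Continuous (F α))
    (hcontr : ∀ α, ∀ k : 𝕜, k ≠ 0 → ∀ x : X, x ≠ 0 → ‖F α (k • x)‖ ≤ M * ‖k‖ * ‖F α x‖)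
    (hpt : ∀ x : X, ∃ c : ℝ, ∀ α, ‖F α x‖ ≤ c)
    (L : ℝ) (hL : 0 < L)
    (hsub : ∀ α, ∀ x₁ x₂ : X, ‖F α (x₁ + x₂)‖ ≤ L * ‖F α x₁ + F α x₂‖) :
    ∃ c : ℝ≥0, 0 < c ∧ ∀ α, pm (F α) ≤ (c : ℝ≥0∞) := by
  have hF : ∀ α, IsContractionOperator 𝕜 M (F α) := hcontr
  obtain ⟨x₀, r, hr, C, hC⟩ := exists_ball_forall_le_of_forall_bddAbove
    (fun α x => ‖F α x‖) (fun α => (hcont α).norm) hpt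
  set C₀ := L * (C + max 1 M * C)
  have hC₀ : ∀ α, ∀ z : X, ‖z‖ < r → ‖F α z‖ ≤ C₀ := fun α _ hz =>
    (hF α).norm_le_of_norm_le_on_ball hL.le (hsub α) (hC α) hz
  let c : ℝ≥0 := ⟨max (max (2 * M * C₀ / r) C₀) 1, zero_le_one.trans (le_max_right _ _)⟩
  refine ⟨c, NNReal.coe_pos.1 (zero_lt_one.trans_le (le_max_right _ _)),
    fun α => pm_le_of_norm_le (fun x hx => ?_) ?_⟩
  · calc ‖F α x‖ ≤ 2 * M * C₀ / r * ‖x‖ :=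
          (hF α).norm_le_mul_norm_of_norm_le_on_ball hM.le hr (hC₀ α) hx
      _ ≤ c * ‖x‖ :=
          mul_le_mul_of_nonneg_right ((le_max_left _ _).trans (le_max_left _ _)) (norm_nonneg x)
  · exact (hC₀ α 0 (by simpa using hr)).trans ((le_max_right _ _).trans (le_max_left _ _))

/-- Nonlinear uniform boundedness theorem: a pointwise bounded family of continuous
`M`-contraction operators from a Banach space satisfying the `L`-subadditivity condition
is uniformly norm bounded. -/
theorem stmt6 {𝕜 X Y I : Type*} [RCLike 𝕜] [NormedAddCommGroup X] [NormedSpace 𝕜 X]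
    [CompleteSpace X] [NormedAddCommGroup Y] [NormedSpace 𝕜 Y]
    (F : I → X → Y) (M : ℝ) (hM : 0 < M)
    (hcont : ∀ α, Continuous (F α))
    (hcontr : ∀ α, ∀ k : 𝕜, k ≠ 0 → ∀ x : X, x ≠ 0 → ‖F α (k • x)‖ ≤ M * ‖k‖ * ‖F α x‖)
    (hpt : ∀ x : X, ∃ c : ℝ, ∀ α, ‖F α x‖ ≤ c)
    (L : ℝ) (hL : 0 < L)
    (hsub : ∀ α, ∀ x₁ x₂ : X, ‖F α (x₁ + x₂)‖ ≤ L * ‖F α x₁ + F α x₂‖) :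
    ∃ c : ℝ≥0, 0 < c ∧ ∀ α, pm (F α) ≤ (c : ℝ≥0∞) :=
  stmt6_general F M hM hcont hcontr hpt L hL hsub
end

section
/- If {F_n} is a sequence of continuous M-contraction operators from a Banach space X into a normed space Y converging pointwise to F : X → Y, and there is L > 0 with ||F_n(x₁+x₂)||_Y ≤ L·||F_n(x₁)+F_n(x₂)||_Y for all n and x₁, x₂ ∈ X, then {F_n} is uniformly norm bounded and F ∈ B(X,Y). -/
open scoped ENNReal NNReal

def IsMContraction (𝕜 : Type*) {X Y : Type*} [NormedField 𝕜] [NormedAddCommGroup X]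
    [NormedSpace 𝕜 X] [NormedAddCommGroup Y] (M : ℝ) (f : X → Y) : Prop :=
  ∀ k : 𝕜, k ≠ 0 → ∀ x : X, x ≠ 0 → ‖f (k • x)‖ ≤ M * ‖k‖ * ‖f x‖

lemma pm_le_ofReal_max {X Y : Type*} [NormedAddCommGroup X] [NormedAddCommGroup Y]
    {f : X → Y} {C a : ℝ} (h0 : ‖f 0‖ ≤ a) (h : ∀ x : X, x ≠ 0 → ‖f x‖ ≤ C * ‖x‖) :
    pm f ≤ ENNReal.ofReal (max C a) := by
  have hmax : 0 ≤ max C a := le_max_of_le_right ((norm_nonneg _).trans h0)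
  refine max_le (iSup_le fun ⟨x, hx⟩ => ?_) ?_
  · have hx' : (‖x‖₊ : ℝ≥0∞) ≠ 0 := by simpa using hx
    rw [ENNReal.div_le_iff_le_mul (Or.inl hx') (Or.inl ENNReal.coe_ne_top),
      ← enorm_eq_nnnorm, ← enorm_eq_nnnorm, ← ofReal_norm, ← ofReal_norm, ← ENNReal.ofReal_mul hmax]
    exact ENNReal.ofReal_le_ofReal ((h x hx).trans (by gcongr; exact le_max_left _ _))
  · rw [← enorm_eq_nnnorm, ← ofReal_norm]
    exact ENNReal.ofReal_le_ofReal (h0.trans (le_max_right _ _))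

lemma exists_closedBall_forall_norm_le {ι X Y : Type*} [PseudoMetricSpace X] [BaireSpace X]
    [Nonempty X] [SeminormedAddCommGroup Y] {f : ι → X → Y} (hf : ∀ i, Continuous (f i))
    (hbdd : ∀ x, ∃ C : ℝ, ∀ i, ‖f i x‖ ≤ C) :
    ∃ x₀ : X, ∃ r > 0, ∃ C : ℝ, ∀ i, ∀ x ∈ Metric.closedBall x₀ r, ‖f i x‖ ≤ C := by
  set E : ℕ → Set X := fun k => ⋂ i, {x | ‖f i x‖ ≤ k}
  have hE : ∀ k, IsClosed (E k) := fun k =>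
    isClosed_iInter fun i => isClosed_le (hf i).norm continuous_const
  have hcover : ⋃ k, E k = Set.univ := by
    refine Set.eq_univ_of_forall fun x => ?_
    obtain ⟨C, hC⟩ := hbdd x
    exact Set.mem_iUnion.2 ⟨⌈C⌉₊, Set.mem_iInter.2 fun i => (hC i).trans (Nat.le_ceil C)⟩
  obtain ⟨k, x₀, hx₀⟩ := nonempty_interior_of_iUnion_of_closed hE hcover
  obtain ⟨r, hr, hball⟩ := Metric.nhds_basis_closedBall.mem_iff.1 (mem_interior_iff_mem_nhds.1 hx₀)
  exact ⟨x₀, r, hr, k, fun i x hx => Set.mem_iInter.1 (hball hx) i⟩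

section Contraction

variable {𝕜 X Y : Type*} [RCLike 𝕜] [NormedAddCommGroup X] [NormedSpace 𝕜 X]
  [NormedAddCommGroup Y] {M : ℝ} {f : X → Y}

lemma IsMContraction.norm_apply_neg_le (hf : IsMContraction 𝕜 M f) (x : X) :
    ‖f (-x)‖ ≤ max 1 M * ‖f x‖ := by
  rcases eq_or_ne x 0 with rfl | hx
  · simpa using mul_le_mul_of_nonneg_right (le_max_left 1 M) (norm_nonneg (f 0))
  · have h := hf (-1) (neg_ne_zero.2 one_ne_zero) x hx
    rw [neg_one_smul, norm_neg, norm_one, mul_one] at h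
    exact h.trans (by gcongr; exact le_max_right _ _)

lemma IsMContraction.norm_le_of_forall_closedBall (hf : IsMContraction 𝕜 M f) {L C r : ℝ}
    (hL : 0 ≤ L) (hsub : ∀ x₁ x₂ : X, ‖f (x₁ + x₂)‖ ≤ L * ‖f x₁ + f x₂‖) {x₀ : X}
    (hC : ∀ x ∈ Metric.closedBall x₀ r, ‖f x‖ ≤ C) {y : X} (hy : ‖y‖ ≤ r) :
    ‖f y‖ ≤ L * (C + max 1 M * C) := by
  have hx₀ : ‖f x₀‖ ≤ C := hC x₀ (Metric.mem_closedBall_self ((norm_nonneg y).trans hy))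
  have hx₀y : ‖f (x₀ + y)‖ ≤ C := hC _ (by simpa [dist_eq_norm] using hy)
  calc ‖f y‖ = ‖f ((x₀ + y) + -x₀)‖ := by rw [add_neg_cancel_comm]
    _ ≤ L * (‖f (x₀ + y)‖ + ‖f (-x₀)‖) :=
      (hsub _ _).trans (mul_le_mul_of_nonneg_left (norm_add_le _ _) hL)
    _ ≤ L * (C + max 1 M * C) := by
      gcongr
      exact (hf.norm_apply_neg_le x₀).trans
        (mul_le_mul_of_nonneg_left hx₀ (zero_le_one.trans (le_max_left _ _)))

lemma IsMContraction.norm_le_mul_norm (hf : IsMContraction 𝕜 M f) (hM : 0 ≤ M) {A r : ℝ}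
    (hr : 0 < r) (hA : ∀ y : X, ‖y‖ ≤ r → ‖f y‖ ≤ A) {x : X} (hx : x ≠ 0) :
    ‖f x‖ ≤ M * A / r * ‖x‖ := by
  set t : ℝ := ‖x‖ / r
  have ht : 0 < t := div_pos (norm_pos_iff.2 hx) hr
  have ht' : (t : 𝕜) ≠ 0 := RCLike.ofReal_ne_zero.2 ht.ne'
  have hz : ‖(t : 𝕜)⁻¹ • x‖ = r := by
    rw [norm_smul, norm_inv, RCLike.norm_ofReal, abs_of_pos ht, inv_mul_eq_iff_eq_mul₀ ht.ne']
    exact (div_mul_cancel₀ _ hr.ne').symm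
  have h := hf (t : 𝕜) ht' _ (smul_ne_zero (inv_ne_zero ht') hx)
  rw [smul_inv_smul₀ ht', RCLike.norm_ofReal, abs_of_pos ht] at h
  calc ‖f x‖ ≤ M * t * A := h.trans (by gcongr; exact hA _ hz.le)
    _ = M * A / r * ‖x‖ := by ring

end Contraction

theorem stmt7_general {𝕜 X Y : Type*} [RCLike 𝕜] [NormedAddCommGroup X] [NormedSpace 𝕜 X]
    [CompleteSpace X] [NormedAddCommGroup Y]
    (F : ℕ → X → Y) (G : X → Y) (M : ℝ) (hM : 0 < M)
    (hcont : ∀ n, Continuous (F n))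
    (hcontr : ∀ n, ∀ k : 𝕜, k ≠ 0 → ∀ x : X, x ≠ 0 → ‖F n (k • x)‖ ≤ M * ‖k‖ * ‖F n x‖)
    (hptconv : ∀ x : X, Filter.Tendsto (fun n => F n x) Filter.atTop (nhds (G x)))
    (L : ℝ) (hL : 0 < L)
    (hsub : ∀ n, ∀ x₁ x₂ : X, ‖F n (x₁ + x₂)‖ ≤ L * ‖F n x₁ + F n x₂‖) :
    ∃ c : ℝ≥0, (∀ n, pm (F n) ≤ (c : ℝ≥0∞)) ∧ pm G ≠ ⊤ := by
  obtain ⟨x₀, r, hr, C, hC⟩ := exists_closedBall_forall_norm_le hcont fun x =>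
    (hptconv x).norm.bddAbove_range.imp fun _ hb n => hb (Set.mem_range_self n)
  set A := L * (C + max 1 M * C)
  have hA : ∀ n, ∀ y : X, ‖y‖ ≤ r → ‖F n y‖ ≤ A := fun n _ hy =>
    IsMContraction.norm_le_of_forall_closedBall (hcontr n) hL.le (hsub n) (hC n) hy
  have hlin : ∀ n, ∀ x : X, x ≠ 0 → ‖F n x‖ ≤ M * A / r * ‖x‖ := fun n _ hx =>
    IsMContraction.norm_le_mul_norm (hcontr n) hM.le hr (hA n) hx
  have hzero : ∀ n, ‖F n 0‖ ≤ A := fun n => hA n 0 (by simpa using hr.le)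
  have hGlin : ∀ x : X, x ≠ 0 → ‖G x‖ ≤ M * A / r * ‖x‖ := fun x hx =>
    le_of_tendsto' (hptconv x).norm fun n => hlin n x hx
  have hGzero : ‖G 0‖ ≤ A := le_of_tendsto' (hptconv 0).norm hzero
  refine ⟨(max (M * A / r) A).toNNReal, fun n => ?_, ?_⟩
  · simpa only [ENNReal.ofReal] using pm_le_ofReal_max (hzero n) (hlin n)
  · exact ne_top_of_le_ne_top ENNReal.ofReal_ne_top (pm_le_ofReal_max hGzero hGlin)

/-- If continuous `M`-contraction operators `Fₙ` from a Banach space converge pointwise to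
`G` and satisfy the `L`-subadditivity condition, then `{Fₙ}` is uniformly norm bounded and
`G ∈ B(X,Y)`. -/
theorem stmt7 {𝕜 X Y : Type*} [RCLike 𝕜] [NormedAddCommGroup X] [NormedSpace 𝕜 X]
    [CompleteSpace X] [NormedAddCommGroup Y] [NormedSpace 𝕜 Y]
    (F : ℕ → X → Y) (G : X → Y) (M : ℝ) (hM : 0 < M)
    (hcont : ∀ n, Continuous (F n))
    (hcontr : ∀ n, ∀ k : 𝕜, k ≠ 0 → ∀ x : X, x ≠ 0 → ‖F n (k • x)‖ ≤ M * ‖k‖ * ‖F n x‖)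
    (hptconv : ∀ x : X, Filter.Tendsto (fun n => F n x) Filter.atTop (nhds (G x)))
    (L : ℝ) (hL : 0 < L)
    (hsub : ∀ n, ∀ x₁ x₂ : X, ‖F n (x₁ + x₂)‖ ≤ L * ‖F n x₁ + F n x₂‖) :
    ∃ c : ℝ≥0, (∀ n, pm (F n) ≤ (c : ℝ≥0∞)) ∧ pm G ≠ ⊤ :=
  stmt7_general F G M hM hcont hcontr hptconv L hL hsub
end

section
/- Nonlinear Hahn-Banach theorem: Let X be a real vector space, p a sub-additive functional on X, S a proper subset of X, and F : S → ℝ satisfying F(s₁) + F(s₂) ≤ p(s₁+s₂) for all s₁, s₂ ∈ S with s₁ ≠ s₂. Then F has an extension F̂ : X → ℝ with F̂(s) = F(s) for s ∈ S and F̂(x₁) + F̂(x₂) ≤ p(x₁+x₂) for all x₁, x₂ ∈ X with x₁ ≠ x₂. -/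
/-- Nonlinear Hahn-Banach theorem: a functional on a proper subset `S` of a real vector
space satisfying `F s₁ + F s₂ ≤ p (s₁ + s₂)` for distinct `s₁, s₂ ∈ S` (with `p`
sub-additive) extends to the whole space with the same inequality for distinct points. -/
theorem stmt8 {X : Type*} [AddCommGroup X] [Module ℝ X]
    (p : X → ℝ) (hp : ∀ x y : X, p (x + y) ≤ p x + p y)
    (S : Set X) (hSne : S.Nonempty) (hSproper : S ≠ Set.univ)
    (F : X → ℝ)
    (hF : ∀ s₁ ∈ S, ∀ s₂ ∈ S, s₁ ≠ s₂ → F s₁ + F s₂ ≤ p (s₁ + s₂)) :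
    ∃ Fhat : X → ℝ, (∀ s ∈ S, Fhat s = F s) ∧
      ∀ x₁ x₂ : X, x₁ ≠ x₂ → Fhat x₁ + Fhat x₂ ≤ p (x₁ + x₂) := by
  obtain ⟨x₀, hx₀⟩ : ∃ x₀, x₀ ∉ S := by
    by_contra hcon
    push_neg at hcon
    exact hSproper (Set.eq_univ_of_forall hcon)
  set h : X → ℝ := fun x => (p (x + x₀) - p (x₀ - x)) / 2 with hh
  -- h satisfies the pair inequality everywhere
  have hL1 : ∀ x₁ x₂ : X, h x₁ + h x₂ ≤ p (x₁ + x₂) := by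
    intro x₁ x₂
    have e1 : x₁ + x₀ = (x₁ + x₂) + (x₀ - x₂) := by abel
    have e2 : x₂ + x₀ = (x₂ + x₁) + (x₀ - x₁) := by abel
    have h1 : p (x₁ + x₀) ≤ p (x₁ + x₂) + p (x₀ - x₂) := by
      rw [e1]; exact hp _ _
    have h2 : p (x₂ + x₀) ≤ p (x₁ + x₂) + p (x₀ - x₁) := by
      rw [e2, add_comm x₂ x₁]; exact hp _ _
    simp only [hh]
    linarith
  -- key anchor estimate
  have key : ∀ (x : X), ∀ a ∈ S, ∀ s ∈ S, a ≠ s →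
      F a - p (a - x) ≤ p (x + s) - F s := by
    intro x a ha s hs hne
    have h1 : F s + F a ≤ p (s + a) := hF s hs a ha (Ne.symm hne)
    have e : s + a = (x + s) + (a - x) := by abel
    have h2 : p (s + a) ≤ p (x + s) + p (a - x) := by rw [e]; exact hp _ _
    linarith
  -- the infimum set is bounded below
  have hbdd : ∀ x : X, BddBelow ((fun s => p (x + s) - F s) '' S) := by
    intro x
    by_cases h2 : ∃ s₁ ∈ S, ∃ s₂ ∈ S, s₁ ≠ s₂
    · obtain ⟨s₁, hs₁, s₂, hs₂, hne⟩ := h2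
      refine ⟨min (F s₁ - p (s₁ - x)) (F s₂ - p (s₂ - x)), ?_⟩
      rintro y ⟨s, hs, rfl⟩
      by_cases hss : s = s₁
      · subst hss
        exact le_trans (min_le_right _ _) (key x s₂ hs₂ s hs (Ne.symm hne))
      · exact le_trans (min_le_left _ _) (key x s₁ hs₁ s hs (fun c => hss c.symm))
    · push_neg at h2
      obtain ⟨s₀, hs₀⟩ := hSne
      refine ⟨p (x + s₀) - F s₀, ?_⟩
      rintro y ⟨s, hs, rfl⟩
      rw [h2 s₀ hs₀ s hs]
  set m : X → ℝ := fun x => sInf ((fun s => p (x + s) - F s) '' S) with hm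
  have hL3 : ∀ x : X, ∀ s ∈ S, m x ≤ p (x + s) - F s := by
    intro x s hs
    exact csInf_le (hbdd x) ⟨s, hs, rfl⟩
  classical
  refine ⟨fun x => if x ∈ S then F x else min (h x) (m x), ?_, ?_⟩
  · intro s hs; simp [hs]
  · intro x₁ x₂ hne
    by_cases h1 : x₁ ∈ S <;> by_cases h2 : x₂ ∈ S <;> beta_reduce
    · rw [if_pos h1, if_pos h2]
      exact hF x₁ h1 x₂ h2 hne
    · rw [if_pos h1, if_neg h2]
      have := hL3 x₂ x₁ h1
      have hle : min (h x₂) (m x₂) ≤ m x₂ := min_le_right _ _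
      have e : x₂ + x₁ = x₁ + x₂ := by abel
      rw [e] at this
      linarith
    · rw [if_neg h1, if_pos h2]
      have := hL3 x₁ x₂ h2
      have hle : min (h x₁) (m x₁) ≤ m x₁ := min_le_right _ _
      linarith
    · rw [if_neg h1, if_neg h2]
      have hle1 : min (h x₁) (m x₁) ≤ h x₁ := min_le_left _ _
      have hle2 : min (h x₂) (m x₂) ≤ h x₂ := min_le_left _ _
      have := hL1 x₁ x₂
      linarith
end

section
/- Let X be a real vector space, S a proper subset of X containing 0, F : S → ℝ with F(0) = 0, and p a sub-linear functional on X such that F(s₁) + F(s₂) ≤ p(s₁+s₂) for all s₁, s₂ ∈ S. Then F has an extension F̂ : X → ℝ with F̂ = F on S and F̂(x₁) + F̂(x₂) ≤ p(x₁+x₂) for all x₁, x₂ ∈ X (including x₁ = x₂). -/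
/-- If `0 ∈ S`, `F 0 = 0`, `p` is sub-linear, and `F s₁ + F s₂ ≤ p (s₁ + s₂)` on the proper
subset `S`, then `F` extends to the whole space with the inequality for all pairs. -/
theorem stmt9 {X : Type*} [AddCommGroup X] [Module ℝ X]
    (p : X → ℝ) (hpadd : ∀ x y : X, p (x + y) ≤ p x + p y)
    (hphom : ∀ t : ℝ, 0 ≤ t → ∀ x : X, p (t • x) = t * p x)
    (S : Set X) (hS0 : (0 : X) ∈ S) (hSproper : S ≠ Set.univ)
    (F : X → ℝ) (hF0 : F 0 = 0)
    (hF : ∀ s₁ ∈ S, ∀ s₂ ∈ S, F s₁ + F s₂ ≤ p (s₁ + s₂)) :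
    ∃ Fhat : X → ℝ, (∀ s ∈ S, Fhat s = F s) ∧
      ∀ x₁ x₂ : X, Fhat x₁ + Fhat x₂ ≤ p (x₁ + x₂) := by
  classical
  have hp0 : p 0 = 0 := by
    have := hphom 0 le_rfl 0
    simpa using this
  -- F s ≤ p s on S
  have hFp : ∀ s ∈ S, F s ≤ p s := by
    intro s hs
    have := hF s hs 0 hS0
    simpa [hF0] using this
  -- key: -p(-x) ≤ p (x + s) - F s
  have hkey : ∀ x : X, ∀ s ∈ S, -p (-x) + F s ≤ p (x + s) := by
    intro x s hs
    have h1 : F s ≤ p s := hFp s hs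
    have h2 : p s ≤ p (x + s) + p (-x) := by
      have := hpadd (x + s) (-x)
      simpa [add_comm, add_assoc, add_left_comm] using this
    linarith
  refine ⟨fun x => if x ∈ S then F x else -p (-x), fun s hs => by simp [hs], ?_⟩
  intro x₁ x₂
  by_cases h1 : x₁ ∈ S <;> by_cases h2 : x₂ ∈ S <;> simp [h1, h2]
  · exact hF x₁ h1 x₂ h2
  · have := hkey x₂ x₁ h1
    linarith [this, (by rw [add_comm] : p (x₂ + x₁) = p (x₁ + x₂))]
  · have := hkey x₁ x₂ h2
    linarith
  · have h3 : p (x₁ + x₂) + p (-(x₁ + x₂)) ≥ 0 := by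
      have := hpadd (x₁ + x₂) (-(x₁ + x₂))
      rwa [add_neg_cancel, hp0] at this
    have h4 : p (-(x₁ + x₂)) ≤ p (-x₁) + p (-x₂) := by
      rw [neg_add]; exact hpadd _ _
    linarith
end

section
/- Let Z be a proper subspace of a vector space X over K (ℝ or ℂ), T : Z → K a linear functional, p a seminorm on X, and f : ℝ → ℝ increasing on [0,∞). If F : Z → ℝ is defined by F(z) = f(|T(z)|) and satisfies F(z) ≤ f(p(z)) for all z ∈ Z, then F has an extension F̂ : X → ℝ of the form F̂(x) = f(|T̂(x)|) with F̂(x) ≤ f(p(x)) for all x ∈ X, where T̂ : X → K is a linear extension of T. -/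
/-!
If `‖T z‖ ≤ p z` on `Z`, the Hahn–Banach theorem gives the extension directly. Otherwise some
`z₀` has `p z₀ < ‖T z₀‖`, and applying the hypothesis to the multiples of `z₀` gives
`f x ≤ f (ρ x)` with `ρ = p z₀ / ‖T z₀‖ < 1`; iterating, `f` is constant on `(0, ∞)` and bounds
`f` on `[0, ∞)`. So it only remains to extend `T` so that `f ‖T̂ x‖ ≤ f 0` where `p x = 0`: either
`T` vanishes on `Z ∩ ker p` and extends by zero on `ker p`, or some `z₁ ∈ ker p` has
`T z₁ ≠ 0`, and then the multiples of `z₁` show `f x ≤ f 0` for all `x ≥ 0`.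
-/

open Set Filter

namespace Seminorm

variable {𝕜 X : Type*} [SeminormedRing 𝕜] [AddCommGroup X] [Module 𝕜 X]

def ker (p : Seminorm 𝕜 X) : Submodule 𝕜 X where
  carrier := {x | p x = 0}
  add_mem' {a b} ha hb :=
    le_antisymm ((map_add_le_add p a b).trans_eq (by simp_all)) (apply_nonneg p _)
  zero_mem' := map_zero p
  smul_mem' c x hx := by simp_all [map_smul_eq_mul]

end Seminorm

theorem LinearMap.exists_extend_eq_zero {K V V' : Type*} [Field K] [AddCommGroup V] [Module K V]
    [AddCommGroup V'] [Module K V'] {Z N : Submodule K V} (T : Z →ₗ[K] V')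
    (hT : ∀ z : Z, (z : V) ∈ N → T z = 0) :
    ∃ g : V →ₗ[K] V', (∀ z : Z, g z = T z) ∧ ∀ x ∈ N, g x = 0 := by
  let S : V →ₗ.[K] V' := LinearPMap.sup ⟨Z, T⟩ ⟨N, 0⟩ fun z n h => hT z (h ▸ n.2)
  obtain ⟨g, hg⟩ := S.toFun.exists_extend
  have hgS (y : S.domain) : g y = S y := congr($hg y)
  refine ⟨g, fun z => ?_, fun x hx => ?_⟩
  · exact (hgS _).trans (LinearPMap.apply_comp_inclusion (LinearPMap.left_le_sup _ _ _) z).symm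
  · exact (hgS _).trans
      (LinearPMap.apply_comp_inclusion (LinearPMap.right_le_sup _ _ _) ⟨x, hx⟩).symm

theorem MonotoneOn.le_of_le_apply_mul {f : ℝ → ℝ} (hf : MonotoneOn f (Ici 0)) {ρ : ℝ}
    (hρ₀ : 0 ≤ ρ) (hρ₁ : ρ < 1) (hfρ : ∀ x, 0 ≤ x → f x ≤ f (x * ρ)) {a b : ℝ} (ha : 0 < a)
    (hb : 0 ≤ b) : f b ≤ f a := by
  have hiter (n : ℕ) : f b ≤ f (b * ρ ^ n) := by
    induction n with
    | zero => simp
    | succ n ih =>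
      rw [pow_succ, ← mul_assoc]
      exact ih.trans (hfρ _ (by positivity))
  have hsmall : ∀ᶠ n in atTop, b * ρ ^ n < a := by
    have := (tendsto_pow_atTop_nhds_zero_of_lt_one hρ₀ hρ₁).const_mul b
    rw [mul_zero] at this
    exact this.eventually (gt_mem_nhds ha)
  obtain ⟨n, hn⟩ := hsmall.exists
  exact (hiter n).trans (hf (by positivity : (0 : ℝ) ≤ b * ρ ^ n) ha.le hn.le)

theorem apply_le_apply_mul_seminorm_div_norm {𝕜 X : Type*} [RCLike 𝕜] [AddCommGroup X]
    [Module 𝕜 X] {Z : Submodule 𝕜 X} {T : Z →ₗ[𝕜] 𝕜} {p : Seminorm 𝕜 X} {f : ℝ → ℝ}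
    (hFp : ∀ z : Z, f ‖T z‖ ≤ f (p (z : X))) {z : Z} (hz : T z ≠ 0) {x : ℝ} (hx : 0 ≤ x) :
    f x ≤ f (x * (p z / ‖T z‖)) := by
  have hTz : 0 < ‖T z‖ := norm_pos_iff.2 hz
  have h := hFp (((x / ‖T z‖ : ℝ) : 𝕜) • z)
  rwa [map_smul, Submodule.coe_smul, map_smul_eq_mul, norm_smul, RCLike.norm_ofReal,
    abs_of_nonneg (by positivity), div_mul_cancel₀ _ hTz.ne', div_mul_comm, mul_comm] at h

theorem stmt11_general {𝕜 X : Type*} [RCLike 𝕜] [AddCommGroup X] [Module 𝕜 X]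
    (Z : Submodule 𝕜 X)
    (T : Z →ₗ[𝕜] 𝕜) (p : Seminorm 𝕜 X)
    (f : ℝ → ℝ) (hf : ∀ a b : ℝ, 0 ≤ a → a ≤ b → f a ≤ f b)
    (hFp : ∀ z : Z, f ‖T z‖ ≤ f (p (z : X))) :
    ∃ That : X →ₗ[𝕜] 𝕜, (∀ z : Z, That (z : X) = T z) ∧
      ∀ x : X, f ‖That x‖ ≤ f (p x) := by
  by_cases hdom : ∀ z : Z, ‖T z‖ ≤ p z
  · obtain ⟨That, hext, hle⟩ := Module.Dual.exists_extension_of_le_seminorm Z T hdom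
    exact ⟨That, hext, fun x => hf _ _ (norm_nonneg _) (hle x)⟩
  by_cases hker : ∀ z : Z, p z = 0 → T z = 0
  · push Not at hdom
    obtain ⟨z₀, hz₀⟩ := hdom
    have hTz₀ : 0 < ‖T z₀‖ := (apply_nonneg p _).trans_lt hz₀
    have hconst : ∀ a b, 0 < a → 0 ≤ b → f b ≤ f a := fun a b =>
      MonotoneOn.le_of_le_apply_mul (fun a ha b _ hab => hf a b ha hab)
        (div_nonneg (apply_nonneg p _) hTz₀.le) ((div_lt_one hTz₀).2 hz₀)
        (fun x => apply_le_apply_mul_seminorm_div_norm hFp (norm_pos_iff.1 hTz₀))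
    obtain ⟨That, hext, hzero⟩ := LinearMap.exists_extend_eq_zero (N := p.ker) T hker
    refine ⟨That, hext, fun x => ?_⟩
    rcases (apply_nonneg p x).eq_or_lt with h0 | hpos
    · rw [hzero x h0.symm, ← h0, norm_zero]
    · exact hconst _ _ hpos (norm_nonneg _)
  · push Not at hker
    obtain ⟨z₁, hpz₁, hTz₁⟩ := hker
    obtain ⟨That, hext⟩ := T.exists_extend
    refine ⟨That, fun z => congr($hext z), fun x => ?_⟩
    have hle_zero := apply_le_apply_mul_seminorm_div_norm hFp hTz₁ (norm_nonneg (That x))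
    rw [hpz₁, zero_div, mul_zero] at hle_zero
    exact hle_zero.trans (hf 0 _ le_rfl (apply_nonneg p x))

/-- If `F z = f (|T z|)` on a proper subspace `Z` with `F z ≤ f (p z)`, where `T` is a
linear functional, `p` a seminorm on `X`, and `f` increasing on `[0, ∞)`, then `F` extends
to `X` in the form `F̂ x = f (|T̂ x|)` with `F̂ x ≤ f (p x)` for a linear extension `T̂`. -/
theorem stmt11 {𝕜 X : Type*} [RCLike 𝕜] [AddCommGroup X] [Module 𝕜 X]
    (Z : Submodule 𝕜 X) (hZ : Z ≠ ⊤)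
    (T : Z →ₗ[𝕜] 𝕜) (p : Seminorm 𝕜 X)
    (f : ℝ → ℝ) (hf : ∀ a b : ℝ, 0 ≤ a → a ≤ b → f a ≤ f b)
    (hFp : ∀ z : Z, f ‖T z‖ ≤ f (p (z : X))) :
    ∃ That : X →ₗ[𝕜] 𝕜, (∀ z : Z, That (z : X) = T z) ∧
      ∀ x : X, f ‖That x‖ ≤ f (p x) :=
  stmt11_general Z T p f hf hFp
end

section
/- Let Y be a normed algebra (with submultiplicative norm) and d_Y the induced metric. Define the multiplication (F₁∗F₂)(x) = F₁(x)F₂(x)/d_X(x,0) for x ≠ 0 and (F₁∗F₂)(0) = F₁(0)F₂(0). Then B_d(X,Y) with norm ||F|| = d(F,0) and multiplication ∗ is a normed algebra: ∗ is associative, bilinear, and satisfies ||F₁∗F₂|| ≤ ||F₁||·||F₂||. If moreover Y is unital with unit 1 of norm 1, then the map e defined by e(x) = d_X(x,0)·1 for x ≠ 0 and e(0) = 1 is a unit of B_d(X,Y) with ||e|| = 1. -/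
open scoped ENNReal NNReal

/-- The (possibly infinite) distance
`d(F₁,F₂) = max(sup_{x ≠ 0} d_Y(F₁ x, F₂ x) / d_X(x, 0), d_Y(F₁ 0, F₂ 0))` on maps. -/
noncomputable def dd {X Y : Type*} [Zero X] [MetricSpace X] [Zero Y] [MetricSpace Y]
    (F G : X → Y) : ℝ≥0∞ :=
  max (⨆ x : {x : X // x ≠ 0}, ENNReal.ofReal (dist (F x.1) (G x.1) / dist x.1 0))
    (ENNReal.ofReal (dist (F 0) (G 0)))

/-- The multiplication `(F₁ ∗ F₂)(x) = F₁(x)F₂(x) / d_X(x,0)` for `x ≠ 0`,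
`(F₁ ∗ F₂)(0) = F₁(0)F₂(0)`. -/
noncomputable def mulB {X Y : Type*} [Zero X] [DecidableEq X] [MetricSpace X]
    [NormedRing Y] [NormedAlgebra ℝ Y] (F G : X → Y) : X → Y :=
  fun x => if x = 0 then F 0 * G 0 else (dist x 0)⁻¹ • (F x * G x)

lemma bound_aux {X Y : Type*} [Zero X] [DecidableEq X] [MetricSpace X]
    [NormedRing Y] [NormedAlgebra ℝ Y] (F G : X → Y) :
    dd (mulB F G) 0 ≤ dd F 0 * dd G 0 := by
  have hF1 : ∀ x : X, x ≠ 0 → ENNReal.ofReal (‖F x‖ / dist x 0) ≤ dd F 0 := by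
    intro x hx
    refine le_trans ?_ (le_max_left _ _)
    have := le_iSup (fun x : {x : X // x ≠ 0} =>
      ENNReal.ofReal (dist (F x.1) ((0 : X → Y) x.1) / dist x.1 0)) ⟨x, hx⟩
    simpa using this
  have hG1 : ∀ x : X, x ≠ 0 → ENNReal.ofReal (‖G x‖ / dist x 0) ≤ dd G 0 := by
    intro x hx
    refine le_trans ?_ (le_max_left _ _)
    have := le_iSup (fun x : {x : X // x ≠ 0} =>
      ENNReal.ofReal (dist (G x.1) ((0 : X → Y) x.1) / dist x.1 0)) ⟨x, hx⟩
    simpa using this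
  have hF0 : ENNReal.ofReal ‖F 0‖ ≤ dd F 0 := by
    refine le_trans ?_ (le_max_right _ _); simp [dd]
  have hG0 : ENNReal.ofReal ‖G 0‖ ≤ dd G 0 := by
    refine le_trans ?_ (le_max_right _ _); simp [dd]
  apply max_le
  · apply iSup_le
    rintro ⟨x, hx⟩
    have hd : (0 : ℝ) < dist x 0 := dist_pos.mpr hx
    simp only [mulB, if_neg hx, Pi.zero_apply, dist_zero_right]
    have h1 : ‖(dist x 0)⁻¹ • (F x * G x)‖ / dist x 0
        ≤ (‖F x‖ / dist x 0) * (‖G x‖ / dist x 0) := by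
      rw [norm_smul, Real.norm_eq_abs, abs_of_nonneg (by positivity)]
      rw [div_le_iff₀ hd]
      have hm : ‖F x * G x‖ ≤ ‖F x‖ * ‖G x‖ := norm_mul_le _ _
      have h2 : (dist x 0)⁻¹ * ‖F x * G x‖ ≤ (dist x 0)⁻¹ * (‖F x‖ * ‖G x‖) := by
        apply mul_le_mul_of_nonneg_left hm (by positivity)
      refine h2.trans (le_of_eq ?_)
      field_simp
    calc ENNReal.ofReal (‖(dist x 0)⁻¹ • (F x * G x)‖ / dist x 0)
        ≤ ENNReal.ofReal ((‖F x‖ / dist x 0) * (‖G x‖ / dist x 0)) :=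
          ENNReal.ofReal_le_ofReal h1
      _ = ENNReal.ofReal (‖F x‖ / dist x 0) * ENNReal.ofReal (‖G x‖ / dist x 0) :=
          ENNReal.ofReal_mul (by positivity)
      _ ≤ dd F 0 * dd G 0 := mul_le_mul' (hF1 x hx) (hG1 x hx)
  · simp only [mulB, if_pos rfl, Pi.zero_apply, dist_zero_right]
    calc ENNReal.ofReal ‖F 0 * G 0‖
        ≤ ENNReal.ofReal (‖F 0‖ * ‖G 0‖) := ENNReal.ofReal_le_ofReal (norm_mul_le _ _)
      _ = ENNReal.ofReal ‖F 0‖ * ENNReal.ofReal ‖G 0‖ := ENNReal.ofReal_mul (norm_nonneg _)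
      _ ≤ dd F 0 * dd G 0 := mul_le_mul' hF0 hG0

/-- `B_d(X,Y)` with the multiplication `∗` is a normed algebra: `∗` is associative and
bilinear with `‖F₁ ∗ F₂‖ ≤ ‖F₁‖ ‖F₂‖`, and if `Y` is unital with `‖1‖ = 1` then
`e(x) = d_X(x,0) • 1` (for `x ≠ 0`), `e(0) = 1` is a unit of norm `1`. -/
theorem stmt18 {X Y : Type*} [AddCommGroup X] [DecidableEq X] [Module ℝ X] [MetricSpace X]
    [NormedRing Y] [NormedAlgebra ℝ Y] [NormOneClass Y]
    (F G H : X → Y) (hF : dd F 0 ≠ ⊤) (hG : dd G 0 ≠ ⊤) (hH : dd H 0 ≠ ⊤) (a : ℝ) :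
    mulB (mulB F G) H = mulB F (mulB G H) ∧
    mulB F (G + H) = mulB F G + mulB F H ∧
    mulB (F + G) H = mulB F H + mulB G H ∧
    mulB (a • F) G = a • mulB F G ∧
    mulB F (a • G) = a • mulB F G ∧
    dd (mulB F G) 0 ≠ ⊤ ∧
    dd (mulB F G) 0 ≤ dd F 0 * dd G 0 ∧
    (mulB F (fun x => if x = 0 then (1 : Y) else (dist x 0) • (1 : Y)) = F ∧
     mulB (fun x => if x = 0 then (1 : Y) else (dist x 0) • (1 : Y)) F = F ∧
     dd (fun x => if x = 0 then (1 : Y) else (dist x 0) • (1 : Y)) 0 = 1) := by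
  have hle := bound_aux F G
  refine ⟨?_, ?_, ?_, ?_, ?_, ?_, hle, ?_, ?_, ?_⟩
  · funext x
    by_cases hx : x = 0
    · simp [mulB, hx, mul_assoc]
    · simp only [mulB, if_neg hx]
      rw [smul_mul_assoc, mul_smul_comm, smul_smul, smul_smul, mul_assoc]
  · funext x
    by_cases hx : x = 0
    · simp [mulB, hx, mul_add]
    · simp [mulB, if_neg hx, mul_add, smul_add]
  · funext x
    by_cases hx : x = 0
    · simp [mulB, hx, add_mul]
    · simp [mulB, if_neg hx, add_mul, smul_add]
  · funext x
    by_cases hx : x = 0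
    · simp [mulB, hx, smul_mul_assoc]
    · simp only [mulB, if_neg hx, Pi.smul_apply, smul_mul_assoc, smul_comm a]
  · funext x
    by_cases hx : x = 0
    · simp [mulB, hx, mul_smul_comm]
    · simp only [mulB, if_neg hx, Pi.smul_apply, mul_smul_comm, smul_comm a]
  · intro htop
    have : dd F 0 * dd G 0 = ⊤ := top_le_iff.mp (htop ▸ hle)
    rcases ENNReal.mul_eq_top.mp this with ⟨_, h⟩ | ⟨h, _⟩
    · exact hG h
    · exact hF h
  · funext x
    by_cases hx : x = 0
    · simp [mulB, hx]
    · have hd : (0 : ℝ) < dist x 0 := dist_pos.mpr hx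
      simp only [mulB, if_neg hx, mul_smul_comm, mul_one, smul_smul,
        inv_mul_cancel₀ hd.ne', one_smul]
  · funext x
    by_cases hx : x = 0
    · simp [mulB, hx]
    · have hd : (0 : ℝ) < dist x 0 := dist_pos.mpr hx
      simp only [mulB, if_neg hx, smul_mul_assoc, one_mul, smul_smul,
        inv_mul_cancel₀ hd.ne', one_smul]
  · apply le_antisymm
    · apply max_le
      · apply iSup_le
        rintro ⟨x, hx⟩
        have hd : (0 : ℝ) < dist x 0 := dist_pos.mpr hx
        simp only [if_neg hx, Pi.zero_apply, dist_zero_right, norm_smul,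
          Real.norm_eq_abs, abs_of_pos hd, norm_one, mul_one, div_self hd.ne']
        simp
      · simp
    · refine le_trans ?_ (le_max_right _ _)
      simp
end
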